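/- For any ε > 0 there does not exist a conformal mapping φ of the unit disc B ⊂ ℝ² onto a bounded simply connected domain D ⊂ ℝ² with infinite geodesic diameter such that φ belongs to the Sobolev class L¹_{2+ε}(B). -/

import Mathlib

open MeasureTheory Filter Topology Set Metric ENNReal NNReal

noncomputable section

/-- The intrinsic (geodesic) distance in `D ⊆ X`: the infimum of lengths
(total variations) of curves in `D` joining `a` to `b`. -/
noncomputable def geoDistOn {X : Type*} [MetricSpace X] (D : Set X) (a b : X) : ℝ≥0∞ :=
  ⨅ (γ : ℝ → X) (_ : ContinuousOn γ (Set.Icc 0 1)) (_ : Set.MapsTo γ (Set.Icc 0 1) D)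
    (_ : γ 0 = a) (_ : γ 1 = b), eVariationOn γ (Set.Icc 0 1)

/-- The geodesic diameter of `D`. -/
noncomputable def geoDiamOn {X : Type*} [MetricSpace X] (D : Set X) : ℝ≥0∞ :=
  ⨆ a ∈ D, ⨆ b ∈ D, geoDistOn D a b

/-! A Morrey-type argument. For `x, m` in a bounded convex domain `s ⊆ ℝⁿ`, the image under `f` of
the segment `[x, m]` has length at most `diam s · ∫₀¹ ‖Df(x + t(m - x))‖ dt`. Averaging over
`m ∈ s`, the map `m ↦ x + t(m - x)` shrinks volumes by `tⁿ`, so Hölder's inequality bounds the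
average by `∫₀¹ t^{-n/p} dt · ‖Df‖_{L^p(s)} · |s|^{1-1/p}`, which is finite when `p > n`. Hence for
any `x, y ∈ s` some `m` makes both segment images short, and the broken line `x → m → y` joins
`f x` to `f y` inside `f(s)` by a curve of uniformly bounded length. A holomorphic map of the disc
is `C¹` over `ℝ`, and `2 + ε > 2 = dim ℝ²`. -/

theorem eVariationOn_Icc_le_lintegral_enorm_deriv {E : Type*} [NormedAddCommGroup E]
    [NormedSpace ℝ E] {f : ℝ → E} {a b : ℝ} (hf : ContDiffOn ℝ 1 f (Icc a b)) :
    eVariationOn f (Icc a b) ≤ ∫⁻ t in Icc a b, ‖deriv f t‖ₑ := by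
  refine iSup_le fun ⟨n, u, hu, hus⟩ => ?_
  have hsub : ∀ i, Icc (u i) (u (i + 1)) ⊆ Icc a b := fun i =>
    Icc_subset_Icc (hus i).1 (hus (i + 1)).2
  calc ∑ i ∈ Finset.range n, edist (f (u (i + 1))) (f (u i))
      ≤ ∑ i ∈ Finset.range n, ∫⁻ t in Ioc (u i) (u (i + 1)), ‖deriv f t‖ₑ := by
        gcongr with i
        rw [edist_eq_enorm_sub, restrict_Ioc_eq_restrict_Icc]
        exact enorm_sub_le_lintegral_deriv_of_contDiffOn_Icc (hf.mono (hsub i)) (hu i.le_succ)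
    _ = ∫⁻ t in ⋃ i ∈ Finset.range n, Ioc (u i) (u (i + 1)), ‖deriv f t‖ₑ :=
        (lintegral_biUnion_finset (hu.pairwise_disjoint_on_Ioc_succ.set_pairwise _)
          (fun _ _ => measurableSet_Ioc) _).symm
    _ ≤ ∫⁻ t in Icc a b, ‖deriv f t‖ₑ :=
        lintegral_mono_set (iUnion₂_subset fun i _ => Ioc_subset_Icc_self.trans (hsub i))

theorem eVariationOn_comp_segment_le {E F : Type*} [NormedAddCommGroup E] [NormedSpace ℝ E]
    [NormedAddCommGroup F] [NormedSpace ℝ F] {f : E → F} {s : Set E}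
    (hf : ContDiffOn ℝ 1 f s) (hs : IsOpen s) (hconv : Convex ℝ s) {x y : E}
    (hx : x ∈ s) (hy : y ∈ s) :
    eVariationOn (f ∘ fun t : ℝ => x + t • (y - x)) (Icc 0 1) ≤
      (∫⁻ t in Icc (0 : ℝ) 1, ‖fderiv ℝ f (x + t • (y - x))‖ₑ) * ‖y - x‖ₑ := by
  have hseg : MapsTo (fun t : ℝ => x + t • (y - x)) (Icc 0 1) s :=
    fun t ht => hconv.add_smul_sub_mem hx hy ht
  refine (eVariationOn_Icc_le_lintegral_enorm_deriv
    (hf.comp (by fun_prop : ContDiff ℝ 1 fun t : ℝ => x + t • (y - x)).contDiffOn hseg)).trans ?_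
  rw [← lintegral_mul_const' _ _ enorm_ne_top]
  refine setLIntegral_mono' measurableSet_Icc fun t ht => ?_
  have hdiff : DifferentiableAt ℝ f (x + t • (y - x)) :=
    (hf.differentiableOn one_ne_zero).differentiableAt (hs.mem_nhds (hseg ht))
  have hderiv : HasDerivAt (fun t : ℝ => x + t • (y - x)) (y - x) t := by
    simpa using ((hasDerivAt_id t).smul_const (y - x)).const_add x
  rw [(hdiff.hasFDerivAt.comp_hasDerivAt t hderiv).deriv]
  exact ContinuousLinearMap.le_opENorm _ _

theorem geoDistOn_le_eVariationOn {X : Type*} [MetricSpace X] {D : Set X} {γ : ℝ → X}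
    (hγ : ContinuousOn γ (Icc 0 1)) (hγD : MapsTo γ (Icc 0 1) D) :
    geoDistOn D (γ 0) (γ 1) ≤ eVariationOn γ (Icc 0 1) :=
  iInf_le_of_le γ <| iInf_le_of_le hγ <| iInf_le_of_le hγD <| iInf_le_of_le rfl <|
    iInf_le_of_le rfl le_rfl

theorem geoDistOn_le_eVariationOn_add {X : Type*} [MetricSpace X] {D : Set X} {γ₁ γ₂ : ℝ → X}
    (h₁ : ContinuousOn γ₁ (Icc 0 1)) (h₂ : ContinuousOn γ₂ (Icc 0 1))
    (hD₁ : MapsTo γ₁ (Icc 0 1) D) (hD₂ : MapsTo γ₂ (Icc 0 1) D) (hend : γ₁ 1 = γ₂ 1) :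
    geoDistOn D (γ₁ 0) (γ₂ 0) ≤ eVariationOn γ₁ (Icc 0 1) + eVariationOn γ₂ (Icc 0 1) := by
  set γ : ℝ → X := fun t => if t ≤ 1 / 2 then γ₁ (2 * t) else γ₂ (2 - 2 * t)
  have hfirst : EqOn γ (γ₁ ∘ fun t => 2 * t) (Icc 0 (1 / 2)) := fun t ht => if_pos ht.2
  have hsecond : EqOn γ (γ₂ ∘ fun t => 2 - 2 * t) (Icc (1 / 2) 1) := by
    intro t ht
    rcases ht.1.eq_or_lt with rfl | h
    · norm_num [γ, hend]
    · exact if_neg h.not_ge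
  have himage₁ : (fun t : ℝ => 2 * t) '' Icc 0 (1 / 2) = Icc 0 1 := by
    rw [image_mul_left_Icc] <;> norm_num
  have himage₂ : (fun t : ℝ => 2 - 2 * t) '' Icc (1 / 2) 1 = Icc 0 1 := by
    ext t; constructor
    · rintro ⟨u, ⟨hu₁, hu₂⟩, rfl⟩; constructor <;> linarith
    · rintro ⟨ht₀, ht₁⟩; exact ⟨1 - t / 2, ⟨by linarith, by linarith⟩, by ring⟩
  have hmaps₁ : MapsTo (fun t : ℝ => 2 * t) (Icc 0 (1 / 2)) (Icc 0 1) :=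
    himage₁ ▸ mapsTo_image _ _
  have hmaps₂ : MapsTo (fun t : ℝ => 2 - 2 * t) (Icc (1 / 2) 1) (Icc 0 1) :=
    himage₂ ▸ mapsTo_image _ _
  have hsplit : Icc (0 : ℝ) 1 = Icc 0 (1 / 2) ∪ Icc (1 / 2) 1 :=
    (Icc_union_Icc_eq_Icc (by norm_num) (by norm_num)).symm
  have hcont : ContinuousOn γ (Icc 0 1) := by
    rw [hsplit]
    exact ((h₁.comp (by fun_prop) hmaps₁).congr hfirst).union_of_isClosed
      ((h₂.comp (by fun_prop) hmaps₂).congr hsecond) isClosed_Icc isClosed_Icc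
  have hγD : MapsTo γ (Icc 0 1) D := by
    rw [hsplit]
    exact ((hD₁.comp hmaps₁).congr hfirst.symm).union ((hD₂.comp hmaps₂).congr hsecond.symm)
  have hvar : eVariationOn γ (Icc 0 1) =
      eVariationOn γ₁ (Icc 0 1) + eVariationOn γ₂ (Icc 0 1) := by
    have := eVariationOn.Icc_add_Icc γ (s := univ) (by norm_num : (0 : ℝ) ≤ 1 / 2)
      (by norm_num : (1 / 2 : ℝ) ≤ 1) (mem_univ _)
    simp only [univ_inter] at this
    rw [← this, eVariationOn.eq_of_eqOn hfirst, eVariationOn.eq_of_eqOn hsecond,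
      eVariationOn.comp_eq_of_monotoneOn _ _ (fun a _ b _ hab => by linarith), himage₁,
      eVariationOn.comp_eq_of_antitoneOn _ _ (fun a _ b _ hab => by linarith), himage₂]
  have hγ₀ : γ 0 = γ₁ 0 := by norm_num [γ]
  have hγ₁ : γ 1 = γ₂ 0 := by norm_num [γ]
  calc geoDistOn D (γ₁ 0) (γ₂ 0) = geoDistOn D (γ 0) (γ 1) := by rw [hγ₀, hγ₁]
    _ ≤ eVariationOn γ (Icc 0 1) := geoDistOn_le_eVariationOn hcont hγD
    _ = _ := hvar

theorem geoDistOn_image_le {E F : Type*} [NormedAddCommGroup E] [NormedSpace ℝ E]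
    [NormedAddCommGroup F] [NormedSpace ℝ F] {f : E → F} {s : Set E}
    (hf : ContDiffOn ℝ 1 f s) (hs : IsOpen s) (hconv : Convex ℝ s) {x y m : E}
    (hx : x ∈ s) (hy : y ∈ s) (hm : m ∈ s) :
    geoDistOn (f '' s) (f x) (f y) ≤
      ((∫⁻ t in Icc (0 : ℝ) 1, ‖fderiv ℝ f (x + t • (m - x))‖ₑ) +
        ∫⁻ t in Icc (0 : ℝ) 1, ‖fderiv ℝ f (y + t • (m - y))‖ₑ) * ediam s := by
  have hcurve : ∀ z ∈ s, ContinuousOn (f ∘ fun t : ℝ => z + t • (m - z)) (Icc 0 1) ∧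
      MapsTo (f ∘ fun t : ℝ => z + t • (m - z)) (Icc 0 1) (f '' s) := fun z hz =>
    have hseg : MapsTo (fun t : ℝ => z + t • (m - z)) (Icc 0 1) s :=
      fun t ht => hconv.add_smul_sub_mem hz hm ht
    ⟨hf.continuousOn.comp (by fun_prop) hseg, (mapsTo_image f s).comp hseg⟩
  have hlen : ∀ z ∈ s, eVariationOn (f ∘ fun t : ℝ => z + t • (m - z)) (Icc 0 1) ≤
      (∫⁻ t in Icc (0 : ℝ) 1, ‖fderiv ℝ f (z + t • (m - z))‖ₑ) * ediam s := fun z hz =>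
    (eVariationOn_comp_segment_le hf hs hconv hz hm).trans <| by
      gcongr
      rw [← edist_eq_enorm_sub]
      exact edist_le_ediam_of_mem hm hz
  have hjoin := geoDistOn_le_eVariationOn_add (hcurve x hx).1 (hcurve y hy).1 (hcurve x hx).2
    (hcurve y hy).2 (by simp)
  simp only [Function.comp_apply, zero_smul, add_zero] at hjoin
  exact hjoin.trans ((add_le_add (hlen x hx) (hlen y hy)).trans_eq (add_mul _ _ _).symm)

theorem lintegral_Ioc_inv_rpow_ne_top {r : ℝ} (hr : r < 1) :
    ∫⁻ t in Ioc (0 : ℝ) 1, (ENNReal.ofReal t)⁻¹ ^ r ≠ ⊤ := by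
  have hpow : ∀ t ∈ Ioc (0 : ℝ) 1, (ENNReal.ofReal t)⁻¹ ^ r = ENNReal.ofReal (t ^ (-r)) :=
    fun t ht => by
      rw [← ENNReal.ofReal_inv_of_pos ht.1, ENNReal.ofReal_rpow_of_pos (inv_pos.2 ht.1),
        Real.inv_rpow ht.1.le, Real.rpow_neg ht.1.le]
  rw [setLIntegral_congr_fun measurableSet_Ioc hpow]
  exact ((intervalIntegral.intervalIntegrable_rpow' (by linarith : -1 < -r)).1.lintegral_lt_top).ne

section HaarMeasure

variable {E : Type*} [NormedAddCommGroup E] [NormedSpace ℝ E] [FiniteDimensional ℝ E]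
  [MeasurableSpace E] [BorelSpace E] {μ : Measure E} [μ.IsAddHaarMeasure]

theorem setLIntegral_comp_homothety_le {s : Set E} (hs : MeasurableSet s) (hconv : Convex ℝ s)
    {G : E → ℝ≥0∞} (hG : Measurable G) {x : E} (hx : x ∈ s) {t : ℝ} (ht : t ∈ Ioc 0 1) :
    ∫⁻ m in s, G (x + t • (m - x)) ∂μ ≤
      (ENNReal.ofReal t)⁻¹ ^ Module.finrank ℝ E * ∫⁻ z in s, G z ∂μ := by
  have hscale : ENNReal.ofReal |(t ^ Module.finrank ℝ E)⁻¹| =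
      (ENNReal.ofReal t)⁻¹ ^ Module.finrank ℝ E := by
    have ht₀ : 0 < t := ht.1
    rw [abs_of_pos (by positivity), ENNReal.ofReal_inv_of_pos (by positivity),
      ENNReal.ofReal_pow ht₀.le, ENNReal.inv_pow]
  calc ∫⁻ m in s, G (x + t • (m - x)) ∂μ
      = ∫⁻ m in s, s.indicator G ((x - t • x) + t • m) ∂μ := by
        refine setLIntegral_congr_fun hs fun m hm => ?_
        have hpoint : x - t • x + t • m = x + t • (m - x) := by rw [smul_sub]; abel
        rw [hpoint, indicator_of_mem (hconv.add_smul_sub_mem hx hm ⟨ht.1.le, ht.2⟩)]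
    _ ≤ ∫⁻ m, s.indicator G ((x - t • x) + t • m) ∂μ := setLIntegral_le_lintegral _ _
    _ = ∫⁻ z, s.indicator G ((x - t • x) + z) ∂(Measure.map (t • ·) μ) :=
        (lintegral_map ((hG.indicator hs).comp (measurable_const_add _))
          (measurable_const_smul t)).symm
    _ = (ENNReal.ofReal t)⁻¹ ^ Module.finrank ℝ E * ∫⁻ z in s, G z ∂μ := by
        rw [Measure.map_addHaar_smul μ ht.1.ne', lintegral_smul_measure,
          lintegral_add_left_eq_self (s.indicator G), lintegral_indicator hs, hscale, smul_eq_mul]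

theorem setLIntegral_comp_homothety_le_rpow {p q : ℝ} (hpq : p.HolderConjugate q) {s : Set E}
    (hs : MeasurableSet s) (hconv : Convex ℝ s) {G : E → ℝ≥0∞} (hG : Measurable G) {x : E}
    (hx : x ∈ s) {t : ℝ} (ht : t ∈ Ioc 0 1) :
    ∫⁻ m in s, G (x + t • (m - x)) ∂μ ≤
      (ENNReal.ofReal t)⁻¹ ^ (Module.finrank ℝ E / p) *
        ((∫⁻ z in s, G z ^ p ∂μ) ^ (1 / p) * μ s ^ (1 / q)) := by
  have hp : 0 ≤ 1 / p := one_div_nonneg.mpr hpq.nonneg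
  have hholder := ENNReal.lintegral_mul_le_Lp_mul_Lq (μ.restrict s) hpq
    (hG.comp (by fun_prop : Measurable fun m => x + t • (m - x))).aemeasurable
    (aemeasurable_const (b := (1 : ℝ≥0∞)))
  simp only [Pi.mul_apply, mul_one, ENNReal.one_rpow, lintegral_const, Measure.restrict_apply,
    MeasurableSet.univ, univ_inter, one_mul] at hholder
  refine hholder.trans ?_
  calc (∫⁻ m in s, G (x + t • (m - x)) ^ p ∂μ) ^ (1 / p) * μ s ^ (1 / q)
      ≤ ((ENNReal.ofReal t)⁻¹ ^ Module.finrank ℝ E * ∫⁻ z in s, G z ^ p ∂μ) ^ (1 / p) *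
          μ s ^ (1 / q) := by
        gcongr
        exact setLIntegral_comp_homothety_le hs hconv (hG.pow_const p) hx ht
    _ = _ := by
        rw [ENNReal.mul_rpow_of_nonneg _ _ hp, ← ENNReal.rpow_natCast, ← ENNReal.rpow_mul,
          mul_one_div, mul_assoc]

theorem setLIntegral_lintegral_segment_le {p q : ℝ} (hpq : p.HolderConjugate q) {s : Set E}
    (hs : MeasurableSet s) (hconv : Convex ℝ s) {G : E → ℝ≥0∞} (hG : Measurable G) {x : E}
    (hx : x ∈ s) :
    ∫⁻ m in s, (∫⁻ t in Icc (0 : ℝ) 1, G (x + t • (m - x))) ∂μ ≤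
      (∫⁻ t in Ioc (0 : ℝ) 1, (ENNReal.ofReal t)⁻¹ ^ (Module.finrank ℝ E / p)) *
        ((∫⁻ z in s, G z ^ p ∂μ) ^ (1 / p) * μ s ^ (1 / q)) := by
  have hmeas : Measurable (Function.uncurry fun (m : E) (t : ℝ) => G (x + t • (m - x))) :=
    hG.comp (by fun_prop)
  rw [← restrict_Ioc_eq_restrict_Icc, lintegral_lintegral_swap hmeas.aemeasurable,
    ← lintegral_mul_const _ (by fun_prop)]
  exact setLIntegral_mono' measurableSet_Ioc fun t ht =>
    setLIntegral_comp_homothety_le_rpow hpq hs hconv hG hx ht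

theorem geoDiamOn_image_ne_top_of_lintegral_enorm_fderiv_rpow_ne_top [Nontrivial E]
    {F : Type*} [NormedAddCommGroup F] [NormedSpace ℝ F] [CompleteSpace F] {f : E → F}
    {s : Set E} (hf : ContDiffOn ℝ 1 f s) (hs : IsOpen s) (hconv : Convex ℝ s)
    (hbdd : Bornology.IsBounded s) (hne : s.Nonempty) {p : ℝ} (hp : Module.finrank ℝ E < p)
    (hint : ∫⁻ z in s, ‖fderiv ℝ f z‖ₑ ^ p ∂μ ≠ ⊤) :
    geoDiamOn (f '' s) ≠ ⊤ := by
  have hpq : p.HolderConjugate p.conjExponent :=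
    .conjExponent (lt_of_le_of_lt (by exact_mod_cast Module.finrank_pos) hp)
  set g : E → ℝ≥0∞ := fun z => ‖fderiv ℝ f z‖ₑ
  have hg : Measurable g := (measurable_fderiv ℝ f).enorm
  set C := (∫⁻ t in Ioc (0 : ℝ) 1, (ENNReal.ofReal t)⁻¹ ^ (Module.finrank ℝ E / p)) *
    ((∫⁻ z in s, g z ^ p ∂μ) ^ (1 / p) * μ s ^ (1 / p.conjExponent))
  have hC : C ≠ ⊤ :=
    mul_ne_top (lintegral_Ioc_inv_rpow_ne_top ((div_lt_one hpq.pos).2 hp))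
      (mul_ne_top (rpow_ne_top_of_nonneg (one_div_nonneg.2 hpq.nonneg) hint)
        (rpow_ne_top_of_nonneg (one_div_nonneg.2 hpq.symm.nonneg) hbdd.measure_lt_top.ne))
  set L : E → E → ℝ≥0∞ := fun x m => ∫⁻ t in Icc (0 : ℝ) 1, g (x + t • (m - x))
  have hL : ∀ x, Measurable (L x) := fun x =>
    (hg.comp (by fun_prop) :
      Measurable fun z : E × ℝ => g (x + z.2 • (z.1 - x))).lintegral_prod_right'
  have hmid : ∀ x ∈ s, ∀ y ∈ s, ∃ m ∈ s, L x m + L y m ≤ (μ s)⁻¹ * (C + C) := by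
    intro x hx y hy
    obtain ⟨m, hm, hle⟩ := exists_le_setLAverage (hs.measure_ne_zero μ hne)
      hbdd.measure_lt_top.ne ((hL x).add (hL y)).aemeasurable
    refine ⟨m, hm, hle.trans ?_⟩
    rw [setLAverage_eq, ENNReal.div_eq_inv_mul, Pi.add_def, lintegral_add_left (hL x)]
    gcongr <;> exact setLIntegral_lintegral_segment_le hpq hs.measurableSet hconv hg ‹_›
  refine ne_top_of_le_ne_top (b := (μ s)⁻¹ * (C + C) * ediam s)
    (mul_ne_top (mul_ne_top (inv_ne_top.2 (hs.measure_ne_zero μ hne)) (add_ne_top.2 ⟨hC, hC⟩))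
      hbdd.ediam_ne_top) ?_
  refine iSup₂_le fun a ha => iSup₂_le fun b hb => ?_
  obtain ⟨x, hx, rfl⟩ := ha
  obtain ⟨y, hy, rfl⟩ := hb
  obtain ⟨m, hm, hLm⟩ := hmid x hx y hy
  exact (geoDistOn_image_le hf hs hconv hx hy hm).trans (by gcongr)

end HaarMeasure

/-- The Sobolev condition `φ ∈ L¹_{2+ε}(B)` is encoded through the classical derivative, which is
the weak one for a holomorphic map. -/
theorem no_conformal_map_onto_infinite_geodesic_diameter_domain :
    ∀ ε : ℝ, 0 < ε →
      ¬ ∃ (φ : ℂ → ℂ) (D : Set ℂ),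
        IsOpen D ∧ IsConnected D ∧ Bornology.IsBounded D ∧ SimplyConnectedSpace D ∧
        geoDiamOn D = ⊤ ∧
        DifferentiableOn ℂ φ (Metric.ball 0 1) ∧
        Set.BijOn φ (Metric.ball 0 1) D ∧
        (∫⁻ z in Metric.ball (0 : ℂ) 1,
          ENNReal.ofReal (‖fderiv ℝ φ z‖ ^ (2 + ε)) ∂volume) ≠ ⊤ := by
  rintro ε hε ⟨φ, D, -, -, -, -, hdiam, hφ, hbij, hint⟩
  have hp : (Module.finrank ℝ ℂ : ℝ) < 2 + ε := by
    rw [Complex.finrank_real_complex]; push_cast; linarith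
  have hint' : ∫⁻ z in ball (0 : ℂ) 1, ‖fderiv ℝ φ z‖ₑ ^ (2 + ε) ≠ ⊤ := by
    simpa only [← ofReal_norm, ENNReal.ofReal_rpow_of_nonneg (norm_nonneg _)
      (by linarith : (0 : ℝ) ≤ 2 + ε)] using hint
  refine geoDiamOn_image_ne_top_of_lintegral_enorm_fderiv_rpow_ne_top
    ((hφ.contDiffOn isOpen_ball).restrict_scalars ℝ) isOpen_ball (convex_ball 0 1)
    isBounded_ball (nonempty_ball.2 one_pos) hp hint' ?_
  rw [hbij.image_eq, hdiam]

end
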